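/- For every real x with 0 ≤ x ≤ 1 and the pure state E₁₁ = |1⟩⟨1| (the 3×3 matrix unit with 1 in the (1,1) entry): Λ_x(E₁₁) = diag(1−x, x/2, x/2) and Λ_x^c(E₁₁) = diag(1−x, 0, x/2, x/2); in particular the two outputs have the same nonzero eigenvalues, so the coherent information of Λ_x at this pure input state is zero. -/

import Mathlib

open Matrix

/-- The interpolated Landau–Streater/Werner–Holevo channel
`Λ_x(ρ) = (1−x)·ρ + (x/2)·(Tr(ρ)·I₃ − ρᵀ)`. -/
noncomputable def Lam (x : ℝ) (ρ : Matrix (Fin 3) (Fin 3) ℂ) : Matrix (Fin 3) (Fin 3) ℂ :=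
  ((1 : ℂ) - (x : ℂ)) • ρ + ((x : ℂ) / 2) • (ρ.trace • (1 : Matrix (Fin 3) (Fin 3) ℂ) - ρᵀ)

/-- The Kraus operators of the channel `Λ_x`:
`K₀ = √(1−x)·I₃` and `K_a = −i·√(x/2)·J_a` for `a = 1,2,3`. -/
noncomputable def K (x : ℝ) : Fin 4 → Matrix (Fin 3) (Fin 3) ℂ :=
  ![(Real.sqrt (1 - x) : ℂ) • (1 : Matrix (Fin 3) (Fin 3) ℂ),
    (-Complex.I) • (Real.sqrt (x / 2) : ℂ) • !![0, 0, 0; 0, 0, 1; 0, -1, 0],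
    (-Complex.I) • (Real.sqrt (x / 2) : ℂ) • !![0, 0, -1; 0, 0, 0; 1, 0, 0],
    (-Complex.I) • (Real.sqrt (x / 2) : ℂ) • !![0, 1, 0; -1, 0, 0; 0, 0, 0]]

/-- The complementary channel `Λ_x^c`, with entries `(Λ_x^c(ρ))_{αβ} = Tr(K_α ρ K_β†)`. -/
noncomputable def LamC (x : ℝ) (ρ : Matrix (Fin 3) (Fin 3) ℂ) : Matrix (Fin 4) (Fin 4) ℂ :=
  Matrix.of fun α β => (K x α * ρ * (K x β)ᴴ).trace

/-!
Since `E₁₁` has trace one and is symmetric, `Λ_x(E₁₁) = (1 − x)·E₁₁ + (x/2)·(I₃ − E₁₁)`.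
For the complementary channel, `Tr(K_α |e⟩⟨e| K_β†) = ⟨K_β e, K_α e⟩`, so `Λ_x^c(E₁₁)` is the
Gram matrix of the first columns `√(1−x)·e₁, 0, −i√(x/2)·e₃, i√(x/2)·e₂` of the Kraus operators;
these are mutually orthogonal with squared norms `1 − x, 0, x/2, x/2`.
-/

theorem Matrix.trace_mul_single_mul {l m n R : Type*} [Fintype l] [Fintype m] [Fintype n]
    [DecidableEq m] [DecidableEq n] [CommSemiring R] (A : Matrix l m R) (i : m) (j : n) (c : R)
    (C : Matrix n l R) : (A * single i j c * C).trace = (C * A) j i * c := by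
  rw [trace_mul_cycle, trace_mul_single, op_smul_eq_mul]

theorem Lam_single_self (x : ℝ) (i : Fin 3) :
    Lam x (single i i 1) = diagonal fun k => if k = i then 1 - (x : ℂ) else x / 2 := by
  ext k l
  simp only [Lam, trace_single_eq_same, transpose_single, one_smul, Matrix.add_apply,
    Matrix.smul_apply, Matrix.sub_apply, single_apply, one_apply, diagonal_apply, smul_eq_mul]
  split_ifs <;> grind

theorem LamC_single_self (x : ℝ) (i : Fin 3) :
    LamC x (single i i 1) = of fun α β => ((K x β)ᴴ * K x α) i i := by
  ext α β
  rw [LamC, of_apply, of_apply, trace_mul_single_mul, mul_one]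

theorem K_apply_zero (x : ℝ) (α : Fin 4) (k : Fin 3) :
    K x α k 0 = ![![(Real.sqrt (1 - x) : ℂ), 0, 0], 0,
      ![0, 0, -Complex.I * Real.sqrt (x / 2)], ![0, Complex.I * Real.sqrt (x / 2), 0]] α k := by
  fin_cases α <;> fin_cases k <;> simp [K]

theorem LamC_single_zero (x : ℝ) (hx0 : 0 ≤ x) (hx1 : x ≤ 1) :
    LamC x (single 0 0 1) = diagonal ![1 - (x : ℂ), 0, x / 2, x / 2] := by
  have ht := Real.mul_self_sqrt (show 0 ≤ 1 - x by linarith)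
  have hs := Real.mul_self_sqrt (show 0 ≤ x / 2 by linarith)
  rw [LamC_single_self]
  ext α β
  simp only [of_apply, mul_apply, conjTranspose_apply, Fin.sum_univ_three, K_apply_zero]
  generalize Real.sqrt (1 - x) = t at ht ⊢
  generalize Real.sqrt (x / 2) = s at hs ⊢
  fin_cases α <;> fin_cases β <;> simp [Complex.ext_iff, ht, hs]

/-- On the pure state `E₁₁ = |1⟩⟨1|`:
`Λ_x(E₁₁) = diag(1−x, x/2, x/2)` and `Λ_x^c(E₁₁) = diag(1−x, 0, x/2, x/2)`;
the two outputs have the same nonzero eigenvalues, so the coherent information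
of `Λ_x` at this input is zero. -/
theorem lam_and_lamC_on_E11 (x : ℝ) (hx0 : 0 ≤ x) (hx1 : x ≤ 1) :
    Lam x (Matrix.single 0 0 (1 : ℂ)) =
      Matrix.diagonal ![1 - (x : ℂ), (x : ℂ) / 2, (x : ℂ) / 2] ∧
    LamC x (Matrix.single 0 0 (1 : ℂ)) =
      Matrix.diagonal ![1 - (x : ℂ), 0, (x : ℂ) / 2, (x : ℂ) / 2] := by
  refine ⟨?_, LamC_single_zero x hx0 hx1⟩
  rw [Lam_single_self]
  congr 1
  funext k
  fin_cases k <;> simp
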